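/- Define for a string e over {f, g, h, ħ} the pair (n_s(e), n_c(e)) of positive integers by n_s(∅) = n_c(∅) = 4 and the recursions n_s(f·e) = n_s(e) + 2n_c(e), n_c(f·e) = n_c(e); n_s(g·e) = n_s(e), n_c(g·e) = 2n_s(e) + n_c(e); n_s(h·e) = 3n_s(e) + 2n_c(e), n_c(h·e) = 2n_s(e) + n_c(e); n_s(ħ·e) = n_s(e) + 2n_c(e), n_c(ħ·e) = 2n_s(e) + 3n_c(e). Then for all e, n_s(e) ≥ 4 and n_c(e) ≥ 4, and for any nonempty string e₀·e the leading character e₀ is determined by the pair (a, b) = (n_s(e₀·e), n_c(e₀·e)): e₀ = f iff a > 2b, e₀ = g iff 2a < b, e₀ = h iff b < a < 2b, and e₀ = ħ iff a < b < 2a. -/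

import Mathlib

/-! Each character acts on `nsc` by a nonnegative integer matrix that dominates the identity,
so the entries never drop below their initial value 4. Each of these matrices maps the open
positive quadrant into its own cone `Ch.Region`, and the four cones are pairwise disjoint, so
the cone containing `nsc (e₀ :: e)` identifies `e₀`. -/

/-- The four-character alphabet `{f, g, h, ħ}`. -/
inductive Ch
  | f | g | h | hb
deriving DecidableEq

/-- The pair `(n_s(e), n_c(e))` counting occurrences of `+ₛ` and `+꜀` in the
signature of the fundamental direction cycle of descent `e`. -/
def nsc : List Ch → ℕ × ℕ
  | [] => (4, 4)
  | c :: e =>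
    let a := (nsc e).1
    let b := (nsc e).2
    match c with
    | .f => (a + 2 * b, b)
    | .g => (a, 2 * a + b)
    | .h => (3 * a + 2 * b, 2 * a + b)
    | .hb => (a + 2 * b, 2 * a + 3 * b)

def Ch.act : Ch → ℕ × ℕ → ℕ × ℕ
  | .f, (a, b) => (a + 2 * b, b)
  | .g, (a, b) => (a, 2 * a + b)
  | .h, (a, b) => (3 * a + 2 * b, 2 * a + b)
  | .hb, (a, b) => (a + 2 * b, 2 * a + 3 * b)

def Ch.Region : Ch → ℕ × ℕ → Prop
  | .f, p => p.1 > 2 * p.2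
  | .g, p => 2 * p.1 < p.2
  | .h, p => p.2 < p.1 ∧ p.1 < 2 * p.2
  | .hb, p => p.1 < p.2 ∧ p.2 < 2 * p.1

theorem nsc_cons (c : Ch) (e : List Ch) : nsc (c :: e) = c.act (nsc e) := by
  cases c <;> rfl

theorem Ch.le_act (c : Ch) (p : ℕ × ℕ) : p ≤ c.act p := by
  obtain ⟨a, b⟩ := p
  cases c <;> constructor <;> dsimp [Ch.act] <;> omega

theorem four_le_nsc (e : List Ch) : (4, 4) ≤ nsc e := by
  induction e with
  | nil => rfl
  | cons c e ih => exact (nsc_cons c e).symm ▸ ih.trans (c.le_act _)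

theorem Ch.region_act {p : ℕ × ℕ} (ha : 0 < p.1) (hb : 0 < p.2) (c : Ch) :
    c.Region (c.act p) := by
  obtain ⟨a, b⟩ := p
  cases c <;> dsimp [Ch.act, Ch.Region] at * <;> omega

theorem Ch.eq_of_region {c c' : Ch} {p : ℕ × ℕ} (h : c.Region p) (h' : c'.Region p) :
    c = c' := by
  cases c <;> cases c' <;> first | rfl | (dsimp [Ch.Region] at h h'; omega)

theorem Ch.eq_iff_region_act {p : ℕ × ℕ} (ha : 0 < p.1) (hb : 0 < p.2) (c c' : Ch) :
    c = c' ↔ c'.Region (c.act p) :=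
  ⟨fun h => h ▸ c.region_act ha hb, fun h => Ch.eq_of_region (c.region_act ha hb) h⟩

theorem nsc_bounds_and_leading_character :
    (∀ e : List Ch, 4 ≤ (nsc e).1 ∧ 4 ≤ (nsc e).2) ∧
    (∀ (e₀ : Ch) (e : List Ch),
      (e₀ = Ch.f ↔ (nsc (e₀ :: e)).1 > 2 * (nsc (e₀ :: e)).2) ∧
      (e₀ = Ch.g ↔ 2 * (nsc (e₀ :: e)).1 < (nsc (e₀ :: e)).2) ∧
      (e₀ = Ch.h ↔
        (nsc (e₀ :: e)).2 < (nsc (e₀ :: e)).1 ∧ (nsc (e₀ :: e)).1 < 2 * (nsc (e₀ :: e)).2) ∧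
      (e₀ = Ch.hb ↔
        (nsc (e₀ :: e)).1 < (nsc (e₀ :: e)).2 ∧ (nsc (e₀ :: e)).2 < 2 * (nsc (e₀ :: e)).1)) := by
  refine ⟨four_le_nsc, fun e₀ e => ?_⟩
  obtain ⟨ha, hb⟩ := four_le_nsc e
  have hlead := e₀.eq_iff_region_act (four_pos.trans_le ha) (four_pos.trans_le hb)
  rw [nsc_cons]
  exact ⟨hlead .f, hlead .g, hlead .h, hlead .hb⟩
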